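/- arXiv:1302.6949 — 2 statements merged into one kernel-verified Lean document; each statement's English description precedes it below -/
import Mathlib

section
/- Let K be a field (possibly finite) and let A₁, A₂ be ℤ-graded associative K-algebras with base-changed gauge automorphisms ρ¹ and ρ². A K-algebra homomorphism f : A₁ → A₂ is a graded homomorphism (i.e. f((A₁)_n) ⊆ (A₂)_n for all n ∈ ℤ) if and only if it is a gauge-homomorphism, i.e. for every commutative K-algebra R and every z ∈ R^× the square commutes: (f ⊗ id_R) ∘ ρ¹_R(z) = ρ²_R(z) ∘ (f ⊗ id_R) as maps A₁ ⊗_K R → A₂ ⊗_K R. -/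
/-!
Homogeneous tensors `a ⊗ r` span `A₁ ⊗ R`, and on them both composites send `a ⊗ r` to
`f a ⊗ zⁿ r` when `f` is graded. Conversely, test the commuting square on the universal unit
`T ∈ K[T;T⁻¹]ˣ`: the gauge map sends `b ⊗ 1` to `∑ₘ bₘ ⊗ Tᵐ`, so the coefficient of `Tⁿ`
recovers the degree-`n` component of `b`. For homogeneous `a` of degree `n` the square gives
`f a ⊗ Tⁿ = ∑ₘ (f a)ₘ ⊗ Tᵐ`, whence `f a = (f a)ₙ`.
-/

open TensorProduct

/-- `ρ` is the base-changed gauge automorphism of `A ⊗[K] R` attached to the unit `z ∈ Rˣ`: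
the (unique) map satisfying `ρ(aₙ ⊗ r) = aₙ ⊗ zⁿ r` for homogeneous `aₙ` of degree `n`. -/
def IsGaugeMap {K A R : Type} [Field K] [Ring A] [Algebra K A]
    (𝒜 : ℤ → Submodule K A) [CommRing R] [Algebra K R] (z : Rˣ)
    (ρ : A ⊗[K] R →ₗ[K] A ⊗[K] R) : Prop :=
  ∀ (n : ℤ) (a : A), a ∈ 𝒜 n → ∀ r : R,
    ρ (a ⊗ₜ[K] r) = a ⊗ₜ[K] (((z ^ n : Rˣ) : R) * r)

open LaurentPolynomial

theorem TensorProduct.ext_of_decomposition {ι K M N R : Type*} [DecidableEq ι] [CommSemiring K]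
    [AddCommMonoid M] [Module K M] [AddCommMonoid N] [Module K N] [AddCommMonoid R] [Module K R]
    (ℳ : ι → Submodule K M) [DirectSum.Decomposition ℳ] {g h : M ⊗[K] R →ₗ[K] N}
    (H : ∀ i, ∀ a ∈ ℳ i, ∀ r : R, g (a ⊗ₜ r) = h (a ⊗ₜ r)) : g = h := by
  refine TensorProduct.ext' fun a r => ?_
  induction a using DirectSum.Decomposition.inductionOn ℳ with
  | zero => simp
  | homogeneous a => exact H _ a a.2 r
  | add a a' ha ha' => simp only [add_tmul, map_add, ha, ha']

section Gauge

variable {K M R : Type*} [CommSemiring K] [AddCommMonoid M] [Module K M]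
  [CommSemiring R] [Algebra K R]
  (ℳ : ℤ → Submodule K M) [DirectSum.Decomposition ℳ]

noncomputable def gaugeMap (z : Rˣ) : M ⊗[K] R →ₗ[K] M ⊗[K] R :=
  TensorProduct.lift
    ((DirectSum.toModule K ℤ (R →ₗ[K] M ⊗[K] R) fun n =>
      ((TensorProduct.mk K M R).compl₂ (LinearMap.mulLeft K ((z ^ n : Rˣ) : R))) ∘ₗ
        (ℳ n).subtype) ∘ₗ (DirectSum.decomposeLinearEquiv ℳ).toLinearMap)

theorem gaugeMap_tmul_of_mem (z : Rˣ) {n : ℤ} {a : M} (ha : a ∈ ℳ n) (r : R) :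
    gaugeMap ℳ z (a ⊗ₜ r) = a ⊗ₜ (((z ^ n : Rˣ) : R) * r) := by
  simp only [gaugeMap, lift.tmul, LinearMap.coe_comp, Function.comp_apply,
    LinearEquiv.coe_coe, DirectSum.decomposeLinearEquiv_apply]
  rw [DirectSum.decompose_of_mem ℳ ha, ← DirectSum.lof_eq_of K, DirectSum.toModule_lof]
  rfl

end Gauge

theorem isGaugeMap_gaugeMap {K A R : Type} [Field K] [Ring A] [Algebra K A]
    (𝒜 : ℤ → Submodule K A) [DirectSum.Decomposition 𝒜] [CommRing R] [Algebra K R] (z : Rˣ) :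
    IsGaugeMap 𝒜 z (gaugeMap 𝒜 z) :=
  fun _ _ ha r => gaugeMap_tmul_of_mem 𝒜 z ha r

noncomputable def LaurentPolynomial.unitT (K : Type*) [CommSemiring K] : K[T;T⁻¹]ˣ :=
  Units.map (AddMonoidAlgebra.of K ℤ) (toUnits (Multiplicative.ofAdd 1))

theorem LaurentPolynomial.val_unitT_zpow (K : Type*) [CommSemiring K] (n : ℤ) :
    ((unitT K ^ n : K[T;T⁻¹]ˣ) : K[T;T⁻¹]) = T n := by
  rw [unitT, ← map_zpow, ← map_zpow, Units.coe_map, val_toUnits_apply,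
    ← ofAdd_zsmul, smul_eq_mul, mul_one, AddMonoidAlgebra.of_apply, toAdd_ofAdd]
  rfl

noncomputable def LaurentPolynomial.coeffTensor (K M : Type*) [CommSemiring K] [AddCommMonoid M]
    [Module K M] (m : ℤ) : M ⊗[K] K[T;T⁻¹] →ₗ[K] M :=
  TensorProduct.rid K M ∘ₗ
    (Finsupp.lapply m ∘ₗ (AddMonoidAlgebra.coeffLinearEquiv K).toLinearMap).lTensor M

@[simp]
theorem LaurentPolynomial.coeffTensor_tmul {K M : Type*} [CommSemiring K] [AddCommMonoid M]
    [Module K M] (m : ℤ) (a : M) (p : K[T;T⁻¹]) :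
    coeffTensor K M m (a ⊗ₜ p) = p.coeff m • a := by
  simp [coeffTensor]

section Detection

variable {K A : Type} [Field K] [Ring A] [Algebra K A]
  {𝒜 : ℤ → Submodule K A} [DirectSum.Decomposition 𝒜]
  {ρ : A ⊗[K] K[T;T⁻¹] →ₗ[K] A ⊗[K] K[T;T⁻¹]}

theorem IsGaugeMap.coeffTensor_apply_tmul_one (hρ : IsGaugeMap 𝒜 (unitT K) ρ) (n : ℤ) (b : A) :
    coeffTensor K A n (ρ (b ⊗ₜ 1)) = DirectSum.decompose 𝒜 b n := by
  induction b using DirectSum.Decomposition.inductionOn 𝒜 with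
  | zero => simp
  | @homogeneous m b =>
    rw [hρ m b b.2, mul_one, val_unitT_zpow, coeffTensor_tmul, T_apply]
    by_cases hmn : m = n
    · subst hmn
      rw [DirectSum.decompose_of_mem_same 𝒜 b.2, if_pos rfl, one_smul]
    · rw [DirectSum.decompose_of_mem_ne 𝒜 b.2 hmn, if_neg hmn, zero_smul]
  | add b b' hb hb' => simp only [add_tmul, map_add, hb, hb', DirectSum.decompose_add,
      DirectSum.add_apply, Submodule.coe_add]

theorem IsGaugeMap.mem_of_apply_tmul_one (hρ : IsGaugeMap 𝒜 (unitT K) ρ) {n : ℤ} {b : A}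
    (hb : ρ (b ⊗ₜ 1) = b ⊗ₜ T n) : b ∈ 𝒜 n := by
  have hcoeff := hρ.coeffTensor_apply_tmul_one n b
  rw [hb, coeffTensor_tmul, T_apply, if_pos rfl, one_smul] at hcoeff
  exact hcoeff ▸ (DirectSum.decompose 𝒜 b n).2

end Detection

theorem IsGaugeMap.rTensor_comp {K A₁ A₂ R : Type} [Field K] [Ring A₁] [Algebra K A₁]
    [Ring A₂] [Algebra K A₂] [CommRing R] [Algebra K R]
    {𝒜₁ : ℤ → Submodule K A₁} [DirectSum.Decomposition 𝒜₁] {𝒜₂ : ℤ → Submodule K A₂}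
    {f : A₁ →ₗ[K] A₂} (hf : ∀ n, ∀ a ∈ 𝒜₁ n, f a ∈ 𝒜₂ n) {z : Rˣ}
    {ρ₁ : A₁ ⊗[K] R →ₗ[K] A₁ ⊗[K] R} {ρ₂ : A₂ ⊗[K] R →ₗ[K] A₂ ⊗[K] R}
    (h₁ : IsGaugeMap 𝒜₁ z ρ₁) (h₂ : IsGaugeMap 𝒜₂ z ρ₂) :
    f.rTensor R ∘ₗ ρ₁ = ρ₂ ∘ₗ f.rTensor R :=
  TensorProduct.ext_of_decomposition 𝒜₁ fun n a ha r => by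
    simp [h₁ n a ha, h₂ n (f a) (hf n a ha)]

/-- A `K`-algebra homomorphism between `ℤ`-graded `K`-algebras is graded iff it is a
gauge-homomorphism: `(f ⊗ id_R) ∘ ρ¹_R(z) = ρ²_R(z) ∘ (f ⊗ id_R)` for every commutative
`K`-algebra `R` and every `z ∈ Rˣ`. -/
theorem graded_hom_iff_gauge_hom
    (K A₁ A₂ : Type) [Field K] [Ring A₁] [Algebra K A₁] [Ring A₂] [Algebra K A₂]
    (𝒜₁ : ℤ → Submodule K A₁) [GradedRing 𝒜₁]
    (𝒜₂ : ℤ → Submodule K A₂) [GradedRing 𝒜₂]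
    (f : A₁ →ₐ[K] A₂) :
    (∀ n : ℤ, ∀ a ∈ 𝒜₁ n, f a ∈ 𝒜₂ n) ↔
    (∀ (R : Type) [CommRing R] [Algebra K R], ∀ (z : Rˣ)
      (ρ₁ : A₁ ⊗[K] R →ₗ[K] A₁ ⊗[K] R) (ρ₂ : A₂ ⊗[K] R →ₗ[K] A₂ ⊗[K] R),
      IsGaugeMap 𝒜₁ z ρ₁ → IsGaugeMap 𝒜₂ z ρ₂ →
      ∀ x : A₁ ⊗[K] R,
        LinearMap.rTensor R f.toLinearMap (ρ₁ x) =
          ρ₂ (LinearMap.rTensor R f.toLinearMap x)) := by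
  refine ⟨fun hf R _ _ z ρ₁ ρ₂ h₁ h₂ => LinearMap.congr_fun (h₁.rTensor_comp hf h₂), ?_⟩
  intro h n a ha
  have hcomm := h _ (unitT K) _ _ (isGaugeMap_gaugeMap 𝒜₁ _) (isGaugeMap_gaugeMap 𝒜₂ _) (a ⊗ₜ 1)
  rw [isGaugeMap_gaugeMap 𝒜₁ _ n a ha, mul_one, val_unitT_zpow, LinearMap.rTensor_tmul,
    LinearMap.rTensor_tmul] at hcomm
  exact (isGaugeMap_gaugeMap 𝒜₂ _).mem_of_apply_tmul_one hcomm.symm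
end

section
/- Let K be a field and A = ⊕_{m∈ℤ} A_m, B = ⊕_{n∈ℤ} B_n ℤ-graded associative K-algebras. The fixed subalgebra of A ⊗_K B under the tensor product gauge action, namely the set of all x ∈ A ⊗_K B such that for every commutative K-algebra R and every z ∈ R^× one has γ_R(z)(x ⊗ 1) = x ⊗ 1, equals the K-subspace Σ_{n∈ℤ} A_n ⊗ B_n of A ⊗_K B, i.e. the span of all elements a ⊗ b with a ∈ A_n and b ∈ B_n for some n ∈ ℤ. -/
/-!
A gauge map over `K[T;T⁻¹]` at `z = T` sends `(a_m ⊗ b_n) ⊗ 1` to `(a_m ⊗ b_n) ⊗ T^(m-n)`, so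
taking the constant coefficient afterwards is the projection of `A ⊗ B` onto `Σ_n A_n ⊗ B_n`
that kills the components of bidegree `(m, n)` with `m ≠ n`; a fixed element is its own
projection. Conversely `a_n ⊗ b_n ⊗ 1` is fixed by every gauge map since `z^(n-n) = 1`.
Gauge maps exist for every `R` and `z`: they are the `R`-linear extensions of the coaction
`a_m ⊗ b_n ↦ (a_m ⊗ b_n) ⊗ z^(m-n)`, defined through `A ⊗ B ≃ ⨁_{m,n} A_m ⊗ B_n`.
-/

open TensorProduct

/-- `γ` is the base change to `R`, at the unit `z ∈ Rˣ`, of the tensor product of the gauge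
action of `A` at `z` with the gauge action of `B` at `z⁻¹`: the (unique) map with
`γ(a_m ⊗ b_n ⊗ r) = a_m ⊗ b_n ⊗ z^(m-n) r` for homogeneous `a_m, b_n`. -/
def IsTensorGaugeMap {K A B R : Type} [Field K] [Ring A] [Algebra K A] [Ring B] [Algebra K B]
    (𝒜 : ℤ → Submodule K A) (ℬ : ℤ → Submodule K B) [CommRing R] [Algebra K R] (z : Rˣ)
    (γ : (A ⊗[K] B) ⊗[K] R →ₗ[K] (A ⊗[K] B) ⊗[K] R) : Prop :=
  ∀ (m n : ℤ) (a : A) (b : B), a ∈ 𝒜 m → b ∈ ℬ n → ∀ r : R,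
    γ ((a ⊗ₜ[K] b) ⊗ₜ[K] r) = (a ⊗ₜ[K] b) ⊗ₜ[K] (((z ^ (m - n) : Rˣ) : R) * r)

section Homogeneous

variable {K M N ι κ : Type*} [CommSemiring K] [AddCommMonoid M] [Module K M]
  [AddCommMonoid N] [Module K N] [DecidableEq ι] [DecidableEq κ]
  (ℳ : ι → Submodule K M) (𝒩 : κ → Submodule K N)
  [DirectSum.Decomposition ℳ] [DirectSum.Decomposition 𝒩]

theorem TensorProduct.span_homogeneous_tmul_eq_top :
    Submodule.span K (Set.image2 (· ⊗ₜ[K] ·) (⋃ i, (ℳ i : Set M)) (⋃ j, (𝒩 j : Set N))) = ⊤ := by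
  refine (Submodule.map₂_span_span K (mk K M N) _ _).symm.trans ?_
  rw [← Submodule.iSup_eq_span, ← Submodule.iSup_eq_span,
    (DirectSum.Decomposition.isInternal ℳ).submodule_iSup_eq_top,
    (DirectSum.Decomposition.isInternal 𝒩).submodule_iSup_eq_top, map₂_mk_top_top_eq_top]

end Homogeneous

namespace LaurentPolynomial

variable (K : Type*) [CommSemiring K]

noncomputable def unitT_s14 : K[T;T⁻¹]ˣ :=
  (AddMonoidAlgebra.of K ℤ).toHomUnits (Multiplicative.ofAdd 1)

theorem val_unitT_zpow_s14 (k : ℤ) : ((unitT_s14 K ^ k : K[T;T⁻¹]ˣ) : K[T;T⁻¹]) = T k := by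
  rw [unitT_s14, ← map_zpow, ← ofAdd_zsmul, smul_eq_mul, mul_one, MonoidHom.coe_toHomUnits,
    AddMonoidAlgebra.of_apply]
  rfl

noncomputable def lcoeff (n : ℤ) : K[T;T⁻¹] →ₗ[K] K :=
  Finsupp.lapply n ∘ₗ (AddMonoidAlgebra.coeffLinearEquiv K).toLinearMap

theorem lcoeff_T (n k : ℤ) : lcoeff K n (T k) = if k = n then 1 else 0 :=
  T_apply n k

end LaurentPolynomial

namespace TensorProduct

open DirectSum

section Gauge

variable {K M N R : Type*} [CommSemiring K] [AddCommMonoid M] [Module K M]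
  [AddCommMonoid N] [Module K N] [CommSemiring R] [Algebra K R]
  (ℳ : ℤ → Submodule K M) (𝒩 : ℤ → Submodule K N)

def diagonalSpan : Submodule K (M ⊗[K] N) :=
  Submodule.span K {x | ∃ n : ℤ, ∃ a ∈ ℳ n, ∃ b ∈ 𝒩 n, x = a ⊗ₜ[K] b}

variable [Decomposition ℳ] [Decomposition 𝒩]

noncomputable def gaugeCoaction (z : Rˣ) : M ⊗[K] N →ₗ[K] (M ⊗[K] N) ⊗[K] R :=
  toModule K (ℤ × ℤ) _ (fun p => (mk K (M ⊗[K] N) R).flip ((z ^ (p.1 - p.2) : Rˣ) : R) ∘ₗ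
      TensorProduct.map (ℳ p.1).subtype (𝒩 p.2).subtype) ∘ₗ
    (TensorProduct.directSum K K (fun m => ℳ m) (fun n => 𝒩 n)).toLinearMap ∘ₗ
    TensorProduct.map (decomposeLinearEquiv ℳ).toLinearMap (decomposeLinearEquiv 𝒩).toLinearMap

theorem gaugeCoaction_tmul (z : Rˣ) {m n : ℤ} {a : M} {b : N} (ha : a ∈ ℳ m) (hb : b ∈ 𝒩 n) :
    gaugeCoaction ℳ 𝒩 z (a ⊗ₜ[K] b) = (a ⊗ₜ[K] b) ⊗ₜ[K] ((z ^ (m - n) : Rˣ) : R) := by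
  simp [gaugeCoaction, decomposeLinearEquiv_apply, decompose_of_mem _ ha, decompose_of_mem _ hb,
    ← lof_eq_of K]

noncomputable def gaugeMap (z : Rˣ) : (M ⊗[K] N) ⊗[K] R →ₗ[K] (M ⊗[K] N) ⊗[K] R :=
  LinearMap.lTensor _ (LinearMap.mul' K R) ∘ₗ (TensorProduct.assoc K _ R R).toLinearMap ∘ₗ
    LinearMap.rTensor R (gaugeCoaction ℳ 𝒩 z)

theorem gaugeMap_tmul (z : Rˣ) {m n : ℤ} {a : M} {b : N} (ha : a ∈ ℳ m) (hb : b ∈ 𝒩 n)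
    (r : R) : gaugeMap ℳ 𝒩 z ((a ⊗ₜ[K] b) ⊗ₜ[K] r) =
      (a ⊗ₜ[K] b) ⊗ₜ[K] (((z ^ (m - n) : Rˣ) : R) * r) := by
  simp [gaugeMap, gaugeCoaction_tmul ℳ 𝒩 z ha hb]

end Gauge

theorem isTensorGaugeMap_gaugeMap {K A B R : Type} [Field K] [Ring A] [Algebra K A] [Ring B]
    [Algebra K B] [CommRing R] [Algebra K R] (𝒜 : ℤ → Submodule K A) (ℬ : ℤ → Submodule K B)
    [Decomposition 𝒜] [Decomposition ℬ] (z : Rˣ) :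
    IsTensorGaugeMap 𝒜 ℬ z (gaugeMap 𝒜 ℬ z) :=
  fun _ _ _ _ ha hb => gaugeMap_tmul 𝒜 ℬ z ha hb

end TensorProduct

namespace IsTensorGaugeMap

variable {K A B R : Type} [Field K] [Ring A] [Algebra K A] [Ring B] [Algebra K B]
  [CommRing R] [Algebra K R] {𝒜 : ℤ → Submodule K A} {ℬ : ℤ → Submodule K B} {z : Rˣ}
  {γ : (A ⊗[K] B) ⊗[K] R →ₗ[K] (A ⊗[K] B) ⊗[K] R}

theorem fixed_of_mem_diagonalSpan (hγ : IsTensorGaugeMap 𝒜 ℬ z γ) {x : A ⊗[K] B}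
    (hx : x ∈ diagonalSpan 𝒜 ℬ) : γ (x ⊗ₜ[K] (1 : R)) = x ⊗ₜ[K] (1 : R) := by
  suffices diagonalSpan 𝒜 ℬ ≤ LinearMap.eqLocus (γ ∘ₗ (mk K (A ⊗[K] B) R).flip 1)
      ((mk K (A ⊗[K] B) R).flip 1) from this hx
  refine Submodule.span_le.mpr ?_
  rintro _ ⟨n, a, ha, b, hb, rfl⟩
  simp [hγ n n a b ha hb]

theorem mem_diagonalSpan_of_fixed [DirectSum.Decomposition 𝒜] [DirectSum.Decomposition ℬ]
    (hγ : IsTensorGaugeMap 𝒜 ℬ z γ) (φ : R →ₗ[K] K)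
    (hφ : ∀ k : ℤ, φ ((z ^ k : Rˣ) : R) = if k = 0 then 1 else 0) {x : A ⊗[K] B}
    (hx : γ (x ⊗ₜ[K] (1 : R)) = x ⊗ₜ[K] (1 : R)) : x ∈ diagonalSpan 𝒜 ℬ := by
  let P : A ⊗[K] B →ₗ[K] A ⊗[K] B :=
    (TensorProduct.rid K _).toLinearMap ∘ₗ LinearMap.lTensor _ φ ∘ₗ γ ∘ₗ
      (mk K (A ⊗[K] B) R).flip 1
  have hφ_one : φ 1 = 1 := by simpa using hφ 0
  have hPx : P x = x := by simp [P, hx, hφ_one]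
  have hP : ⊤ ≤ (diagonalSpan 𝒜 ℬ).comap P := by
    rw [← span_homogeneous_tmul_eq_top 𝒜 ℬ, Submodule.span_le]
    rintro _ ⟨a, ⟨_, ⟨m, rfl⟩, ha⟩, b, ⟨_, ⟨n, rfl⟩, hb⟩, rfl⟩
    have hPab : P (a ⊗ₜ b) = (if m - n = 0 then (1 : K) else 0) • a ⊗ₜ b := by
      simp [P, hγ m n a b ha hb, hφ]
    rw [SetLike.mem_coe, Submodule.mem_comap, hPab]
    split_ifs with hmn
    · rw [sub_eq_zero.mp hmn] at ha
      exact Submodule.smul_mem _ _ (Submodule.subset_span ⟨n, a, ha, b, hb, rfl⟩)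
    · rw [zero_smul]
      exact Submodule.zero_mem _
  exact hPx ▸ hP Submodule.mem_top

end IsTensorGaugeMap

/-- The fixed subalgebra of `A ⊗[K] B` under the tensor product gauge action equals
`Σ_{n∈ℤ} A_n ⊗ B_n`, the `K`-span of all `a ⊗ b` with `a ∈ A_n`, `b ∈ B_n` for some `n`. -/
theorem fixed_algebra_of_tensor_gauge_action
    (K A B : Type) [Field K] [Ring A] [Algebra K A] [Ring B] [Algebra K B]
    (𝒜 : ℤ → Submodule K A) [GradedRing 𝒜] (ℬ : ℤ → Submodule K B) [GradedRing ℬ] :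
    {x : A ⊗[K] B | ∀ (R : Type) [CommRing R] [Algebra K R],
        ∀ (z : Rˣ) (γ : (A ⊗[K] B) ⊗[K] R →ₗ[K] (A ⊗[K] B) ⊗[K] R),
          IsTensorGaugeMap 𝒜 ℬ z γ → γ (x ⊗ₜ[K] (1 : R)) = x ⊗ₜ[K] (1 : R)} =
      ↑(Submodule.span K
        {x : A ⊗[K] B | ∃ n : ℤ, ∃ a ∈ 𝒜 n, ∃ b ∈ ℬ n, x = a ⊗ₜ[K] b}) := by
  ext x
  refine ⟨fun hx => ?_, fun hx R _ _ z γ hγ => hγ.fixed_of_mem_diagonalSpan hx⟩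
  have hT := isTensorGaugeMap_gaugeMap (R := LaurentPolynomial K) 𝒜 ℬ (LaurentPolynomial.unitT_s14 K)
  exact hT.mem_diagonalSpan_of_fixed (LaurentPolynomial.lcoeff K 0)
    (by simp [LaurentPolynomial.val_unitT_zpow_s14, LaurentPolynomial.lcoeff_T]) (hx _ _ _ hT)
end
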